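/- arXiv:1904.06919 — 2 statements merged into one kernel-verified Lean document; each statement's English description precedes it below -/
import Mathlib

section
/- Every hornALC_∇-concept H is equivalent to a Horn first-order formula with one free variable, i.e., there is a Horn formula φ(x) such that for every τ-structure 𝔄 and every a∈dom(𝔄): a∈H^𝔄 iff 𝔄 ⊨ φ(a). In particular, for every ELU_∇-concept L and every Horn formula ψ(z̄), the formula L†(x) → ψ(z̄) (where L† is the standard translation of L) is equivalent to a Horn formula. -/
/-- A τ-structure over domain `D`, for a vocabulary with concept names `Con`
(unary predicates) and role names `Rol` (binary predicates). -/
structure Str (Con Rol : Type) (D : Type) where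
  conI : Con → Set D
  rolI : Rol → Set (D × D)

/-- ALC-concepts over the vocabulary `(Con, Rol)`. -/
inductive ALC (Con Rol : Type) where
  | top : ALC Con Rol
  | bot : ALC Con Rol
  | atomic : Con → ALC Con Rol
  | neg : ALC Con Rol → ALC Con Rol
  | disj : ALC Con Rol → ALC Con Rol → ALC Con Rol
  | conj : ALC Con Rol → ALC Con Rol → ALC Con Rol
  | impl : ALC Con Rol → ALC Con Rol → ALC Con Rol
  | ex : Rol → ALC Con Rol → ALC Con Rol
  | all : Rol → ALC Con Rol → ALC Con Rol

variable {Con Rol D D1 D2 : Type}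

/-- The extension `C^𝔄` of an ALC-concept in a structure. -/
def ALC.sem (M : Str Con Rol D) : ALC Con Rol → Set D
  | .top => Set.univ
  | .bot => ∅
  | .atomic A => M.conI A
  | .neg C => (C.sem M)ᶜ
  | .disj C C' => C.sem M ∪ C'.sem M
  | .conj C C' => C.sem M ∩ C'.sem M
  | .impl C C' => (C.sem M)ᶜ ∪ C'.sem M
  | .ex R C => {a | ∃ b, (a, b) ∈ M.rolI R ∧ b ∈ C.sem M}
  | .all R C => {a | ∀ b, (a, b) ∈ M.rolI R → b ∈ C.sem M}

/-- The depth of an ALC-concept: maximal nesting of `∃R` and `∀R`. -/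
def ALC.depth : ALC Con Rol → ℕ
  | .top | .bot | .atomic _ => 0
  | .neg C => C.depth
  | .disj C C' | .conj C C' | .impl C C' => max C.depth C'.depth
  | .ex _ C | .all _ C => C.depth + 1

/-- ELU-concepts: built from concept names and ⊤ using ⊓, ⊔ and ∃R only. -/
inductive ALC.IsELU : ALC Con Rol → Prop
  | top : IsELU .top
  | atomic (A : Con) : IsELU (.atomic A)
  | conj {C C' : ALC Con Rol} : IsELU C → IsELU C' → IsELU (.conj C C')
  | disj {C C' : ALC Con Rol} : IsELU C → IsELU C' → IsELU (.disj C C')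
  | ex (R : Rol) {C : ALC Con Rol} : IsELU C → IsELU (.ex R C)

/-- hornALC-concepts: `H ::= ⊥ | ⊤ | A | H⊓H' | L→H | ∃R.H | ∀R.H` with `L` an ELU-concept. -/
inductive ALC.IsHorn : ALC Con Rol → Prop
  | bot : IsHorn .bot
  | top : IsHorn .top
  | atomic (A : Con) : IsHorn (.atomic A)
  | conj {H H' : ALC Con Rol} : IsHorn H → IsHorn H' → IsHorn (.conj H H')
  | impl {L H : ALC Con Rol} : IsELU L → IsHorn H → IsHorn (.impl L H)
  | ex (R : Rol) {H : ALC Con Rol} : IsHorn H → IsHorn (.ex R H)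
  | all (R : Rol) {H : ALC Con Rol} : IsHorn H → IsHorn (.all R H)

/-- `S` is a simulation between `M` and `N`. -/
def IsSim (M : Str Con Rol D1) (N : Str Con Rol D2) (S : Set (D1 × D2)) : Prop :=
  ∀ a b, (a, b) ∈ S →
    (∀ A, a ∈ M.conI A → b ∈ N.conI A) ∧
    (∀ R a', (a, a') ∈ M.rolI R → ∃ b', (b, b') ∈ N.rolI R ∧ (a', b') ∈ S)

/-- `𝔄,a ⪯_sim 𝔅,b`: some simulation contains `(a,b)`. -/
def Sim (M : Str Con Rol D1) (N : Str Con Rol D2) (a : D1) (b : D2) : Prop :=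
  ∃ S, IsSim M N S ∧ (a, b) ∈ S

/-- The ℓ-round simulation relations `⪯^ℓ_sim`. -/
def SimL (M : Str Con Rol D1) (N : Str Con Rol D2) : ℕ → D1 → D2 → Prop
  | 0 => fun a b => ∀ A, a ∈ M.conI A → b ∈ N.conI A
  | ℓ + 1 => fun a b =>
      (∀ A, a ∈ M.conI A → b ∈ N.conI A) ∧
      ∀ R a', (a, a') ∈ M.rolI R → ∃ b', (b, b') ∈ N.rolI R ∧ SimL M N ℓ a' b'

/-- `X R↑ Y`. -/
def relUp (R : Set (D1 × D1)) (X Y : Set D1) : Prop := ∀ a ∈ X, ∃ b ∈ Y, (a, b) ∈ R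

/-- `X R↓ Y`. -/
def relDown (R : Set (D1 × D1)) (X Y : Set D1) : Prop := ∀ b ∈ Y, ∃ a ∈ X, (a, b) ∈ R

/-- `Z` is a Horn simulation between `M` and `N`. -/
def IsHornSim (M : Str Con Rol D1) (N : Str Con Rol D2) (Z : Set (Set D1 × D2)) : Prop :=
  ∀ X b, (X, b) ∈ Z →
    X.Nonempty ∧
    (∀ A, X ⊆ M.conI A → b ∈ N.conI A) ∧
    (∀ R Y, relUp (M.rolI R) X Y →
        ∃ Y', Y' ⊆ Y ∧ ∃ b', (b, b') ∈ N.rolI R ∧ (Y', b') ∈ Z) ∧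
    (∀ R b', (b, b') ∈ N.rolI R → ∃ Y, relDown (M.rolI R) X Y ∧ (Y, b') ∈ Z) ∧
    (∀ a ∈ X, Sim N M b a)

/-- `𝔄,X ⪯_horn 𝔅,b`: some Horn simulation contains `(X,b)`. -/
def HornSim (M : Str Con Rol D1) (N : Str Con Rol D2) (X : Set D1) (b : D2) : Prop :=
  ∃ Z, IsHornSim M N Z ∧ (X, b) ∈ Z

/-- The ℓ-round Horn simulation relations `⪯^ℓ_horn`. -/
def HornSimL (M : Str Con Rol D1) (N : Str Con Rol D2) : ℕ → Set D1 → D2 → Prop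
  | 0 => fun X b =>
      X.Nonempty ∧ (∀ A, X ⊆ M.conI A → b ∈ N.conI A) ∧ ∀ a ∈ X, SimL N M 0 b a
  | ℓ + 1 => fun X b =>
      (X.Nonempty ∧ (∀ A, X ⊆ M.conI A → b ∈ N.conI A) ∧ ∀ a ∈ X, SimL N M 0 b a) ∧
      (∀ R Y, relUp (M.rolI R) X Y →
          ∃ Y', Y' ⊆ Y ∧ ∃ b', (b, b') ∈ N.rolI R ∧ HornSimL M N ℓ Y' b') ∧
      (∀ R b', (b, b') ∈ N.rolI R → ∃ Y, relDown (M.rolI R) X Y ∧ HornSimL M N ℓ Y b') ∧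
      (∀ a ∈ X, SimL N M (ℓ + 1) b a)

/-- `𝔄,X ≤^ℓ_hornALC 𝔅,b`. -/
def leHornDepth (M : Str Con Rol D1) (N : Str Con Rol D2) (ℓ : ℕ) (X : Set D1) (b : D2) : Prop :=
  ∀ C : ALC Con Rol, C.IsHorn → C.depth ≤ ℓ → X ⊆ C.sem M → b ∈ C.sem N

/-- `𝔄,X ≤_hornALC 𝔅,b`. -/
def leHorn (M : Str Con Rol D1) (N : Str Con Rol D2) (X : Set D1) (b : D2) : Prop :=
  ∀ C : ALC Con Rol, C.IsHorn → X ⊆ C.sem M → b ∈ C.sem N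

/-- `𝔄,a ≤^ℓ_ELU 𝔅,b`. -/
def leELUDepth (M : Str Con Rol D1) (N : Str Con Rol D2) (ℓ : ℕ) (a : D1) (b : D2) : Prop :=
  ∀ C : ALC Con Rol, C.IsELU → C.depth ≤ ℓ → a ∈ C.sem M → b ∈ C.sem N

/-- `𝔄,a ≤_ELU 𝔅,b`. -/
def leELU (M : Str Con Rol D1) (N : Str Con Rol D2) (a : D1) (b : D2) : Prop :=
  ∀ C : ALC Con Rol, C.IsELU → a ∈ C.sem M → b ∈ C.sem N

/-- First-order formulas over the vocabulary `(Con, Rol)` (with equality), using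
natural numbers as variables. -/
inductive FO (Con Rol : Type) where
  | eq : ℕ → ℕ → FO Con Rol
  | catom : Con → ℕ → FO Con Rol
  | ratom : Rol → ℕ → ℕ → FO Con Rol
  | not : FO Con Rol → FO Con Rol
  | and : FO Con Rol → FO Con Rol → FO Con Rol
  | or : FO Con Rol → FO Con Rol → FO Con Rol
  | imp : FO Con Rol → FO Con Rol → FO Con Rol
  | ex : ℕ → FO Con Rol → FO Con Rol
  | all : ℕ → FO Con Rol → FO Con Rol

/-- Satisfaction of a first-order formula in a structure under a valuation. -/
def FO.sem (M : Str Con Rol D) : FO Con Rol → (ℕ → D) → Prop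
  | .eq x y, v => v x = v y
  | .catom A x, v => v x ∈ M.conI A
  | .ratom R x y, v => (v x, v y) ∈ M.rolI R
  | .not φ, v => ¬ φ.sem M v
  | .and φ ψ, v => φ.sem M v ∧ ψ.sem M v
  | .or φ ψ, v => φ.sem M v ∨ ψ.sem M v
  | .imp φ ψ, v => φ.sem M v → ψ.sem M v
  | .ex n φ, v => ∃ d : D, φ.sem M (Function.update v n d)
  | .all n φ, v => ∀ d : D, φ.sem M (Function.update v n d)

/-- Atomic first-order formulas. -/
inductive FO.IsAtom : FO Con Rol → Prop
  | eq (x y : ℕ) : IsAtom (.eq x y)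
  | catom (A : Con) (x : ℕ) : IsAtom (.catom A x)
  | ratom (R : Rol) (x y : ℕ) : IsAtom (.ratom R x y)

/-- Disjunctions of negations of atoms. -/
inductive FO.IsNegClause : FO Con Rol → Prop
  | neg {φ : FO Con Rol} : IsAtom φ → IsNegClause (.not φ)
  | or {φ ψ : FO Con Rol} : IsNegClause φ → IsNegClause ψ → IsNegClause (.or φ ψ)

/-- Basic Horn formulas: disjunctions of formulas at most one of which is an atom,
the remaining ones being negations of atoms. -/
inductive FO.IsBasicHorn : FO Con Rol → Prop
  | pos {φ : FO Con Rol} : IsAtom φ → IsBasicHorn φ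
  | neg {φ : FO Con Rol} : IsNegClause φ → IsBasicHorn φ
  | orL {φ ψ : FO Con Rol} : IsNegClause φ → IsBasicHorn ψ → IsBasicHorn (.or φ ψ)
  | orR {φ ψ : FO Con Rol} : IsBasicHorn φ → IsNegClause ψ → IsBasicHorn (.or φ ψ)

/-- Horn formulas: constructed from basic Horn formulas using ∧, ∃ and ∀. -/
inductive FO.IsHorn : FO Con Rol → Prop
  | basic {φ : FO Con Rol} : IsBasicHorn φ → IsHorn φ
  | and {φ ψ : FO Con Rol} : IsHorn φ → IsHorn ψ → IsHorn (.and φ ψ)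
  | ex (n : ℕ) {φ : FO Con Rol} : IsHorn φ → IsHorn (.ex n φ)
  | all (n : ℕ) {φ : FO Con Rol} : IsHorn φ → IsHorn (.all n φ)

/-- ELU_∇-concepts: built from concept names and ⊤ using ⊓, ⊔, ∃R and
`∇R.C = ∃R.⊤ ⊓ ∀R.C`. -/
inductive ALC.IsELUNabla : ALC Con Rol → Prop
  | top : IsELUNabla .top
  | atomic (A : Con) : IsELUNabla (.atomic A)
  | conj {C C' : ALC Con Rol} : IsELUNabla C → IsELUNabla C' → IsELUNabla (.conj C C')
  | disj {C C' : ALC Con Rol} : IsELUNabla C → IsELUNabla C' → IsELUNabla (.disj C C')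
  | ex (R : Rol) {C : ALC Con Rol} : IsELUNabla C → IsELUNabla (.ex R C)
  | nabla (R : Rol) {C : ALC Con Rol} :
      IsELUNabla C → IsELUNabla (.conj (.ex R .top) (.all R C))

/-- hornALC_∇-concepts: like hornALC-concepts, but with ELU_∇-concepts on the left of →. -/
inductive ALC.IsHornNabla : ALC Con Rol → Prop
  | bot : IsHornNabla .bot
  | top : IsHornNabla .top
  | atomic (A : Con) : IsHornNabla (.atomic A)
  | conj {H H' : ALC Con Rol} : IsHornNabla H → IsHornNabla H' → IsHornNabla (.conj H H')
  | impl {L H : ALC Con Rol} : IsELUNabla L → IsHornNabla H → IsHornNabla (.impl L H)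
  | ex (R : Rol) {H : ALC Con Rol} : IsHornNabla H → IsHornNabla (.ex R H)
  | all (R : Rol) {H : ALC Con Rol} : IsHornNabla H → IsHornNabla (.all R H)

/-- The standard translation `C†` of an ALC-concept, with free variable `x_k`
(using `x_{k+1}` for the quantified variable). -/
def ALC.tr : ALC Con Rol → ℕ → FO Con Rol
  | .top, k => .eq k k
  | .bot, k => .not (.eq k k)
  | .atomic A, k => .catom A k
  | .neg C, k => .not (C.tr k)
  | .conj C C', k => .and (C.tr k) (C'.tr k)
  | .disj C C', k => .or (C.tr k) (C'.tr k)
  | .impl C C', k => .imp (C.tr k) (C'.tr k)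
  | .ex R C, k => .ex (k + 1) (.and (.ratom R k (k + 1)) (C.tr (k + 1)))
  | .all R C, k => .all (k + 1) (.imp (.ratom R k (k + 1)) (C.tr (k + 1)))

/-- Size of a first-order formula. -/
def FO.size : FO Con Rol → ℕ
  | .eq _ _ => 1
  | .catom _ _ => 1
  | .ratom _ _ _ => 1
  | .not φ => φ.size + 1
  | .and φ ψ => φ.size + ψ.size + 1
  | .or φ ψ => φ.size + ψ.size + 1
  | .imp φ ψ => φ.size + ψ.size + 1
  | .ex _ φ => φ.size + 1
  | .all _ φ => φ.size + 1

/-- A strict upper bound on all variables (free and bound) of a formula. -/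
def FO.mv : FO Con Rol → ℕ
  | .eq x y => max x y + 1
  | .catom _ x => x + 1
  | .ratom _ x y => max x y + 1
  | .not φ => φ.mv
  | .and φ ψ => max φ.mv ψ.mv
  | .or φ ψ => max φ.mv ψ.mv
  | .imp φ ψ => max φ.mv ψ.mv
  | .ex n φ => max (n + 1) φ.mv
  | .all n φ => max (n + 1) φ.mv

lemma FO.sem_update_mv {D : Type} (M : Str Con Rol D) :
    ∀ (φ : FO Con Rol) (v : ℕ → D) (m : ℕ) (d : D), φ.mv ≤ m →
      (φ.sem M (Function.update v m d) ↔ φ.sem M v) := by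
  intro φ
  induction φ with
  | eq x y =>
      intro v m d h
      simp only [FO.mv] at h
      have hx : x ≠ m := by omega
      have hy : y ≠ m := by omega
      simp [FO.sem, Function.update_of_ne hx, Function.update_of_ne hy]
  | catom A x =>
      intro v m d h
      simp only [FO.mv] at h
      have hx : x ≠ m := by omega
      simp [FO.sem, Function.update_of_ne hx]
  | ratom R x y =>
      intro v m d h
      simp only [FO.mv] at h
      have hx : x ≠ m := by omega
      have hy : y ≠ m := by omega
      simp [FO.sem, Function.update_of_ne hx, Function.update_of_ne hy]
  | not φ ih =>
      intro v m d h
      simp only [FO.mv] at h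
      simp [FO.sem, ih v m d h]
  | and φ ψ ih1 ih2 =>
      intro v m d h
      simp only [FO.mv, max_le_iff] at h
      simp [FO.sem, ih1 v m d h.1, ih2 v m d h.2]
  | or φ ψ ih1 ih2 =>
      intro v m d h
      simp only [FO.mv, max_le_iff] at h
      simp [FO.sem, ih1 v m d h.1, ih2 v m d h.2]
  | imp φ ψ ih1 ih2 =>
      intro v m d h
      simp only [FO.mv, max_le_iff] at h
      simp [FO.sem, ih1 v m d h.1, ih2 v m d h.2]
  | ex n φ ih =>
      intro v m d h
      simp only [FO.mv, max_le_iff] at h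
      have hnm : m ≠ n := by omega
      simp only [FO.sem]
      constructor
      · rintro ⟨e, he⟩
        refine ⟨e, ?_⟩
        rw [Function.update_comm hnm] at he
        exact (ih _ m d h.2).1 he
      · rintro ⟨e, he⟩
        refine ⟨e, ?_⟩
        rw [Function.update_comm hnm]
        exact (ih _ m d h.2).2 he
  | all n φ ih =>
      intro v m d h
      simp only [FO.mv, max_le_iff] at h
      have hnm : m ≠ n := by omega
      simp only [FO.sem]
      constructor
      · intro he e
        have := he e
        rw [Function.update_comm hnm] at this
        exact (ih _ m d h.2).1 this
      · intro he e
        rw [Function.update_comm hnm]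
        exact (ih _ m d h.2).2 (he e)

/-- Renaming all variable occurrences (free and bound) of a formula. -/
def FO.rename (σ : ℕ → ℕ) : FO Con Rol → FO Con Rol
  | .eq x y => .eq (σ x) (σ y)
  | .catom A x => .catom A (σ x)
  | .ratom R x y => .ratom R (σ x) (σ y)
  | .not φ => .not (φ.rename σ)
  | .and φ ψ => .and (φ.rename σ) (ψ.rename σ)
  | .or φ ψ => .or (φ.rename σ) (ψ.rename σ)
  | .imp φ ψ => .imp (φ.rename σ) (ψ.rename σ)
  | .ex n φ => .ex (σ n) (φ.rename σ)
  | .all n φ => .all (σ n) (φ.rename σ)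

lemma FO.size_rename (σ : ℕ → ℕ) : ∀ φ : FO Con Rol, (φ.rename σ).size = φ.size := by
  intro φ
  induction φ <;> simp [FO.rename, FO.size, *]

lemma FO.size_pos : ∀ φ : FO Con Rol, 1 ≤ φ.size := by
  intro φ; induction φ <;> simp [FO.size] <;> omega

lemma FO.sem_rename {D : Type} (M : Str Con Rol D) (σ : ℕ → ℕ) (hσ : Function.Injective σ) :
    ∀ (φ : FO Con Rol) (v : ℕ → D), (φ.rename σ).sem M v ↔ φ.sem M (v ∘ σ) := by
  have key : ∀ (v : ℕ → D) (n : ℕ) (d : D),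
      (Function.update v (σ n) d) ∘ σ = Function.update (v ∘ σ) n d := by
    intro v n d
    funext m
    by_cases h : m = n
    · subst h; simp
    · have : σ m ≠ σ n := fun hc => h (hσ hc)
      simp [Function.comp, Function.update_of_ne h, Function.update_of_ne this]
  intro φ
  induction φ with
  | eq x y => intro v; simp [FO.rename, FO.sem, Function.comp]
  | catom A x => intro v; simp [FO.rename, FO.sem, Function.comp]
  | ratom R x y => intro v; simp [FO.rename, FO.sem, Function.comp]
  | not φ ih => intro v; simp [FO.rename, FO.sem, ih]
  | and φ ψ ih1 ih2 => intro v; simp [FO.rename, FO.sem, ih1, ih2]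
  | or φ ψ ih1 ih2 => intro v; simp [FO.rename, FO.sem, ih1, ih2]
  | imp φ ψ ih1 ih2 => intro v; simp [FO.rename, FO.sem, ih1, ih2]
  | ex n φ ih =>
      intro v
      simp only [FO.rename, FO.sem]
      constructor
      · rintro ⟨d, hd⟩; exact ⟨d, by rw [← key]; exact (ih _).1 hd⟩
      · rintro ⟨d, hd⟩; exact ⟨d, (ih _).2 (by rw [key]; exact hd)⟩
  | all n φ ih =>
      intro v
      simp only [FO.rename, FO.sem]
      constructor
      · intro h d; rw [← key]; exact (ih _).1 (h d)
      · intro h d; exact (ih _).2 (by rw [key]; exact h d)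

lemma FO.IsAtom.rename {σ : ℕ → ℕ} {φ : FO Con Rol} (h : φ.IsAtom) : (φ.rename σ).IsAtom := by
  cases h <;> constructor

lemma FO.IsNegClause.rename {σ : ℕ → ℕ} {φ : FO Con Rol} (h : φ.IsNegClause) :
    (φ.rename σ).IsNegClause := by
  induction h with
  | neg h => exact .neg h.rename
  | or _ _ ih1 ih2 => exact .or ih1 ih2

lemma FO.IsBasicHorn.rename {σ : ℕ → ℕ} {φ : FO Con Rol} (h : φ.IsBasicHorn) :
    (φ.rename σ).IsBasicHorn := by
  induction h with
  | pos h => exact .pos h.rename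
  | neg h => exact .neg h.rename
  | orL h _ ih => exact .orL h.rename ih
  | orR _ h ih => exact .orR ih h.rename

lemma FO.IsHorn.rename {σ : ℕ → ℕ} {φ : FO Con Rol} (h : φ.IsHorn) : (φ.rename σ).IsHorn := by
  induction h with
  | basic h => exact .basic h.rename
  | and _ _ ih1 ih2 => exact .and ih1 ih2
  | ex n _ ih => exact .ex _ ih
  | all n _ ih => exact .all _ ih

lemma update_comp_swap {D : Type} (v : ℕ → D) (n m : ℕ) (hmn : m ≠ n) (d : D) :
    (Function.update v m d) ∘ ⇑(Equiv.swap n m) =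
      Function.update (Function.update v n d) m (v n) := by
  funext j
  simp only [Function.comp_apply]
  rcases eq_or_ne j n with rfl | hjn
  · rw [Equiv.swap_apply_left, Function.update_self, Function.update_of_ne (Ne.symm hmn),
      Function.update_self]
  · rcases eq_or_ne j m with rfl | hjm
    · rw [Equiv.swap_apply_right, Function.update_of_ne (Ne.symm hmn), Function.update_self]
    · rw [Equiv.swap_apply_of_ne_of_ne hjn hjm, Function.update_of_ne hjm,
        Function.update_of_ne hjm, Function.update_of_ne hjn]

lemma FO.negGuard_aux : ∀ (k : ℕ) (ψ : FO Con Rol), ψ.size ≤ k → ψ.IsHorn →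
    ∀ ν : FO Con Rol, ν.IsNegClause →
    ∃ χ : FO Con Rol, χ.IsHorn ∧
      ∀ (D : Type) [Nonempty D] (M : Str Con Rol D) (v : ℕ → D),
        χ.sem M v ↔ (ν.sem M v ∨ ψ.sem M v) := by
  intro k
  induction k with
  | zero => intro ψ hsz; exact absurd hsz (by have := ψ.size_pos; omega)
  | succ k ih =>
    intro ψ hsz hψ ν hν
    cases hψ with
    | basic hb =>
        exact ⟨.or ν ψ, .basic (.orL hν hb), fun D _ M v => by simp [FO.sem]⟩
    | @and φ₁ φ₂ h1 h2 =>
        obtain ⟨χ₁, hχ₁, hs₁⟩ := ih φ₁ (by simp [FO.size] at hsz ⊢; omega) h1 ν hν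
        obtain ⟨χ₂, hχ₂, hs₂⟩ := ih φ₂ (by simp [FO.size] at hsz ⊢; omega) h2 ν hν
        refine ⟨.and χ₁ χ₂, .and hχ₁ hχ₂, fun D _ M v => ?_⟩
        simp only [FO.sem, hs₁, hs₂]
        tauto
    | @ex n φ h =>
        set m := max ν.mv (max φ.mv (n + 1)) with hm
        set σ : ℕ → ℕ := ⇑(Equiv.swap n m) with hσ
        have hσinj : Function.Injective σ := (Equiv.swap n m).injective
        obtain ⟨χ, hχ, hs⟩ := ih (φ.rename σ)
          (by rw [FO.size_rename]; simp [FO.size] at hsz; omega) h.rename ν hν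
        have hmn : m ≠ n := by omega
        refine ⟨.ex m χ, .ex m hχ, fun D _ M v => ?_⟩
        simp only [FO.sem]
        have step : ∀ d : D, χ.sem M (Function.update v m d) ↔
            (ν.sem M v ∨ φ.sem M (Function.update v n d)) := by
          intro d
          rw [hs]
          have hν' : ν.sem M (Function.update v m d) ↔ ν.sem M v :=
            FO.sem_update_mv M ν v m d (by omega)
          have hφ' : (φ.rename σ).sem M (Function.update v m d) ↔
              φ.sem M (Function.update v n d) := by
            rw [FO.sem_rename M σ hσinj]
            have hcomp : (Function.update v m d) ∘ σ =
                Function.update (Function.update v n d) m (v n) :=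
              update_comp_swap v n m hmn d
            rw [hcomp, FO.sem_update_mv M φ _ m (v n) (by omega)]
          rw [hν', hφ']
        simp only [step]
        rw [exists_or]
        simp
    | @all n φ h =>
        set m := max ν.mv (max φ.mv (n + 1)) with hm
        set σ : ℕ → ℕ := ⇑(Equiv.swap n m) with hσ
        have hσinj : Function.Injective σ := (Equiv.swap n m).injective
        obtain ⟨χ, hχ, hs⟩ := ih (φ.rename σ)
          (by rw [FO.size_rename]; simp [FO.size] at hsz; omega) h.rename ν hν
        have hmn : m ≠ n := by omega
        refine ⟨.all m χ, .all m hχ, fun D _ M v => ?_⟩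
        simp only [FO.sem]
        have step : ∀ d : D, χ.sem M (Function.update v m d) ↔
            (ν.sem M v ∨ φ.sem M (Function.update v n d)) := by
          intro d
          rw [hs]
          have hν' : ν.sem M (Function.update v m d) ↔ ν.sem M v :=
            FO.sem_update_mv M ν v m d (by omega)
          have hφ' : (φ.rename σ).sem M (Function.update v m d) ↔
              φ.sem M (Function.update v n d) := by
            rw [FO.sem_rename M σ hσinj]
            have hcomp : (Function.update v m d) ∘ σ =
                Function.update (Function.update v n d) m (v n) :=
              update_comp_swap v n m hmn d
            rw [hcomp, FO.sem_update_mv M φ _ m (v n) (by omega)]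
          rw [hν', hφ']
        simp only [step]
        by_cases hνv : ν.sem M v
        · simp [hνv]
        · simp [hνv]

/-- Guarding a Horn formula by an atom yields (up to equivalence) a Horn formula. -/
lemma FO.atomGuard {α : FO Con Rol} (hα : α.IsAtom) {ψ : FO Con Rol} (hψ : ψ.IsHorn) :
    ∃ χ : FO Con Rol, χ.IsHorn ∧
      ∀ (D : Type) [Nonempty D] (M : Str Con Rol D) (v : ℕ → D),
        χ.sem M v ↔ (α.sem M v → ψ.sem M v) := by
  obtain ⟨χ, h1, h2⟩ := FO.negGuard_aux ψ.size ψ le_rfl hψ (.not α) (.neg hα)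
  refine ⟨χ, h1, fun D _ M v => ?_⟩
  rw [h2]
  simp only [FO.sem]
  tauto

/-- Correctness of the standard translation. -/
lemma ALC.tr_sem {D : Type} (M : Str Con Rol D) :
    ∀ (C : ALC Con Rol) (k : ℕ) (v : ℕ → D), (C.tr k).sem M v ↔ v k ∈ C.sem M := by
  intro C
  induction C with
  | top => intro k v; simp [ALC.tr, ALC.sem, FO.sem]
  | bot => intro k v; simp [ALC.tr, ALC.sem, FO.sem]
  | atomic A => intro k v; simp [ALC.tr, ALC.sem, FO.sem]
  | neg C ih => intro k v; simp [ALC.tr, ALC.sem, FO.sem, ih]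
  | disj C C' ih1 ih2 => intro k v; simp [ALC.tr, ALC.sem, FO.sem, ih1, ih2]
  | conj C C' ih1 ih2 => intro k v; simp [ALC.tr, ALC.sem, FO.sem, ih1, ih2]
  | impl C C' ih1 ih2 =>
      intro k v
      simp only [ALC.tr, ALC.sem, FO.sem, ih1, ih2, Set.mem_union, Set.mem_compl_iff]
      tauto
  | ex R C ih =>
      intro k v
      simp only [ALC.tr, ALC.sem, FO.sem, ih, Set.mem_setOf_eq]
      constructor
      · rintro ⟨d, h1, h2⟩
        rw [Function.update_of_ne (by omega), Function.update_self] at h1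
        rw [Function.update_self] at h2
        exact ⟨d, h1, h2⟩
      · rintro ⟨d, h1, h2⟩
        refine ⟨d, ?_, ?_⟩
        · rw [Function.update_of_ne (by omega), Function.update_self]; exact h1
        · rw [Function.update_self]; exact h2
  | all R C ih =>
      intro k v
      simp only [ALC.tr, ALC.sem, FO.sem, ih, Set.mem_setOf_eq]
      constructor
      · intro h d hd
        have := h d
        rw [Function.update_of_ne (by omega), Function.update_self] at this
        exact this hd
      · intro h d
        rw [Function.update_of_ne (by omega), Function.update_self]
        exact h d

/-- Key lemma: guarding a Horn formula by the standard translation of an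
ELU_∇ concept yields (up to equivalence) a Horn formula. -/
lemma ALC.eluGuard : ∀ {L : ALC Con Rol}, L.IsELUNabla →
    ∀ (x : ℕ) (ψ : FO Con Rol), ψ.IsHorn →
    ∃ χ : FO Con Rol, χ.IsHorn ∧
      ∀ (D : Type) [Nonempty D] (M : Str Con Rol D) (v : ℕ → D),
        χ.sem M v ↔ (v x ∈ L.sem M → ψ.sem M v) := by
  intro L hL
  induction hL with
  | top =>
      intro x ψ hψ
      exact ⟨ψ, hψ, fun D _ M v => by simp [ALC.sem]⟩
  | atomic A =>
      intro x ψ hψ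
      obtain ⟨χ, h1, h2⟩ := FO.atomGuard (.catom A x) hψ
      exact ⟨χ, h1, fun D _ M v => by rw [h2]; simp [ALC.sem, FO.sem]⟩
  | @conj C C' _ _ ih1 ih2 =>
      intro x ψ hψ
      obtain ⟨χ', hχ', hs'⟩ := ih2 x ψ hψ
      obtain ⟨χ, hχ, hs⟩ := ih1 x χ' hχ'
      refine ⟨χ, hχ, fun D _ M v => ?_⟩
      rw [hs, hs']
      simp only [ALC.sem, Set.mem_inter_iff]
      tauto
  | @disj C C' _ _ ih1 ih2 =>
      intro x ψ hψ
      obtain ⟨χ₁, hχ₁, hs₁⟩ := ih1 x ψ hψ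
      obtain ⟨χ₂, hχ₂, hs₂⟩ := ih2 x ψ hψ
      refine ⟨.and χ₁ χ₂, .and hχ₁ hχ₂, fun D _ M v => ?_⟩
      simp only [FO.sem, hs₁, hs₂, ALC.sem, Set.mem_union]
      tauto
  | @ex R C _ ih =>
      intro x ψ hψ
      set n := max (x + 1) ψ.mv with hn
      obtain ⟨χC, hχC, hsC⟩ := ih n ψ hψ
      obtain ⟨χ₁, hχ₁, hs₁⟩ := FO.atomGuard (.ratom R x n) hχC
      refine ⟨.all n χ₁, .all n hχ₁, fun D _ M v => ?_⟩
      simp only [FO.sem]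
      have step : ∀ d : D, χ₁.sem M (Function.update v n d) ↔
          ((v x, d) ∈ M.rolI R → (d ∈ C.sem M → ψ.sem M v)) := by
        intro d
        rw [hs₁]
        simp only [FO.sem]
        rw [Function.update_of_ne (by omega), Function.update_self, hsC,
          Function.update_self, FO.sem_update_mv M ψ v n d (by omega)]
      simp only [step, ALC.sem, Set.mem_setOf_eq]
      constructor
      · rintro h ⟨d, h1, h2⟩
        exact h d h1 h2
      · intro h d h1 h2
        exact h ⟨d, h1, h2⟩
  | @nabla R C _ ih =>
      intro x ψ hψ
      set n := max (x + 1) ψ.mv with hn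
      set m := n + 1 with hm
      obtain ⟨χC, hχC, hsC⟩ := ih n ψ hψ
      set θ : FO Con Rol := .ex n (.and (.ratom R x n) χC) with hθ
      have hθHorn : θ.IsHorn := .ex n (.and (.basic (.pos (.ratom R x n))) hχC)
      obtain ⟨χ₁, hχ₁, hs₁⟩ := FO.atomGuard (.ratom R x m) hθHorn
      refine ⟨.all m χ₁, .all m hχ₁, fun D _ M v => ?_⟩
      simp only [FO.sem]
      have hθsem : ∀ d : D, θ.sem M (Function.update v m d) ↔
          ∃ e, (v x, e) ∈ M.rolI R ∧ (e ∈ C.sem M → ψ.sem M v) := by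
        intro d
        simp only [hθ, FO.sem]
        constructor
        · rintro ⟨e, h1, h2⟩
          rw [Function.update_of_ne (by omega), Function.update_of_ne (by omega),
            Function.update_self] at h1
          rw [hsC, Function.update_self, FO.sem_update_mv M ψ _ n e (by omega),
            FO.sem_update_mv M ψ v m d (by omega)] at h2
          exact ⟨e, h1, h2⟩
        · rintro ⟨e, h1, h2⟩
          refine ⟨e, ?_, ?_⟩
          · rw [Function.update_of_ne (by omega), Function.update_of_ne (by omega),
              Function.update_self]
            exact h1
          · rw [hsC, Function.update_self, FO.sem_update_mv M ψ _ n e (by omega),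
              FO.sem_update_mv M ψ v m d (by omega)]
            exact h2
      have step : ∀ d : D, χ₁.sem M (Function.update v m d) ↔
          ((v x, d) ∈ M.rolI R →
            ∃ e, (v x, e) ∈ M.rolI R ∧ (e ∈ C.sem M → ψ.sem M v)) := by
        intro d
        rw [hs₁, hθsem d]
        have hr : (FO.ratom R x m).sem M (Function.update v m d) ↔ (v x, d) ∈ M.rolI R := by
          simp only [FO.sem]
          rw [Function.update_of_ne (by omega), Function.update_self]
        rw [hr]
      simp only [step, ALC.sem, Set.mem_inter_iff, Set.mem_setOf_eq]
      constructor
      · rintro h ⟨⟨d, hd, -⟩, hall⟩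
        obtain ⟨e, he1, he2⟩ := h d hd
        exact he2 (hall e he1)
      · intro h d hd
        by_cases hU : ∀ b, (v x, b) ∈ M.rolI R → b ∈ C.sem M
        · exact ⟨d, hd, fun _ => h ⟨⟨d, hd, Set.mem_univ d⟩, hU⟩⟩
        · push_neg at hU
          obtain ⟨e, he1, he2⟩ := hU
          exact ⟨e, he1, fun hc => absurd hc he2⟩

/-- Every hornALC_∇-concept translates (at any free variable) to an equivalent
Horn formula. -/
lemma ALC.hornNabla_tr : ∀ {H : ALC Con Rol}, H.IsHornNabla → ∀ x : ℕ,
    ∃ φ : FO Con Rol, φ.IsHorn ∧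
      ∀ (D : Type) [Nonempty D] (M : Str Con Rol D) (v : ℕ → D),
        φ.sem M v ↔ v x ∈ H.sem M := by
  intro H hH
  induction hH with
  | bot =>
      intro x
      refine ⟨.not (.eq x x), .basic (.neg (.neg (.eq x x))), fun D _ M v => ?_⟩
      simp [FO.sem, ALC.sem]
  | top =>
      intro x
      exact ⟨.eq x x, .basic (.pos (.eq x x)), fun D _ M v => by simp [FO.sem, ALC.sem]⟩
  | atomic A =>
      intro x
      exact ⟨.catom A x, .basic (.pos (.catom A x)),
        fun D _ M v => by simp [FO.sem, ALC.sem]⟩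
  | @conj H H' _ _ ih1 ih2 =>
      intro x
      obtain ⟨φ₁, h₁, hs₁⟩ := ih1 x
      obtain ⟨φ₂, h₂, hs₂⟩ := ih2 x
      exact ⟨.and φ₁ φ₂, .and h₁ h₂, fun D _ M v => by
        simp [FO.sem, ALC.sem, hs₁, hs₂]⟩
  | @impl L H hL _ ih =>
      intro x
      obtain ⟨φH, hφH, hsH⟩ := ih x
      obtain ⟨χ, hχ, hs⟩ := ALC.eluGuard hL x φH hφH
      refine ⟨χ, hχ, fun D _ M v => ?_⟩
      rw [hs, hsH]
      simp only [ALC.sem, Set.mem_union, Set.mem_compl_iff]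
      tauto
  | @ex R H _ ih =>
      intro x
      obtain ⟨φH, hφH, hsH⟩ := ih (x + 1)
      refine ⟨.ex (x + 1) (.and (.ratom R x (x + 1)) φH),
        .ex _ (.and (.basic (.pos (.ratom R x (x + 1)))) hφH), fun D _ M v => ?_⟩
      simp only [FO.sem, ALC.sem, Set.mem_setOf_eq, hsH]
      constructor
      · rintro ⟨d, h1, h2⟩
        rw [Function.update_of_ne (by omega), Function.update_self] at h1
        rw [Function.update_self] at h2
        exact ⟨d, h1, h2⟩
      · rintro ⟨d, h1, h2⟩
        refine ⟨d, ?_, ?_⟩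
        · rw [Function.update_of_ne (by omega), Function.update_self]; exact h1
        · rw [Function.update_self]; exact h2
  | @all R H _ ih =>
      intro x
      obtain ⟨φH, hφH, hsH⟩ := ih (x + 1)
      obtain ⟨χ₁, hχ₁, hs₁⟩ := FO.atomGuard (.ratom R x (x + 1)) hφH
      refine ⟨.all (x + 1) χ₁, .all _ hχ₁, fun D _ M v => ?_⟩
      simp only [FO.sem, ALC.sem, Set.mem_setOf_eq]
      have step : ∀ d : D, χ₁.sem M (Function.update v (x + 1) d) ↔
          ((v x, d) ∈ M.rolI R → d ∈ H.sem M) := by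
        intro d
        rw [hs₁]
        simp only [FO.sem]
        rw [Function.update_of_ne (by omega), Function.update_self, hsH,
          Function.update_self]
      simp only [step]

/-- Every hornALC_∇-concept is equivalent to a Horn first-order formula with one free
variable; in particular, for every ELU_∇-concept `L` and Horn formula `ψ`, the formula
`L†(x) → ψ` is equivalent to a Horn formula. -/
theorem hornALCNabla_equiv_hornFO {Con Rol : Type} :
    (∀ H : ALC Con Rol, H.IsHornNabla →
      ∃ φ : FO Con Rol, φ.IsHorn ∧
        ∀ (D : Type) [Nonempty D] (M : Str Con Rol D) (a : D) (v : ℕ → D),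
          a ∈ H.sem M ↔ φ.sem M (Function.update v 0 a)) ∧
    (∀ (L : ALC Con Rol) (ψ : FO Con Rol) (x : ℕ), L.IsELUNabla → ψ.IsHorn →
      ∃ χ : FO Con Rol, χ.IsHorn ∧
        ∀ (D : Type) [Nonempty D] (M : Str Con Rol D) (v : ℕ → D),
          (FO.imp (L.tr x) ψ).sem M v ↔ χ.sem M v) := by
  constructor
  · intro H hH
    obtain ⟨φ, hφ, hs⟩ := ALC.hornNabla_tr hH 0
    refine ⟨φ, hφ, fun D _ M a v => ?_⟩
    rw [hs, Function.update_self]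
  · intro L ψ x hL hψ
    obtain ⟨χ, hχ, hs⟩ := ALC.eluGuard hL x ψ hψ
    refine ⟨χ, hχ, fun D _ M v => ?_⟩
    rw [hs]
    simp only [FO.sem, ALC.tr_sem M L x v]
end

section
/- (Ehrenfeucht–Fraïssé game for ELU_∇.) For any finite vocabulary τ, any τ-structures 𝔄, 𝔅 with a ∈ dom(𝔄), b ∈ dom(𝔅), and any natural number ℓ: 𝔄,a ≤^ℓ_{ELU_∇} 𝔅,b if and only if 𝔄,a ⪯^ℓ_∇ 𝔅,b. Moreover, if 𝔄 and 𝔅 are finite, then 𝔄,a ≤_{ELU_∇} 𝔅,b if and only if 𝔄,a ⪯_∇ 𝔅,b. -/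
variable {Con Rol D D1 D2 : Type}

/-- `Z` is an ELU_∇-simulation between `M` and `N`. -/
def IsNablaSim (M : Str Con Rol D1) (N : Str Con Rol D2) (Z : Set (D1 × D2)) : Prop :=
  ∀ a b, (a, b) ∈ Z →
    (∀ A, a ∈ M.conI A → b ∈ N.conI A) ∧
    (∀ R a', (a, a') ∈ M.rolI R → ∃ b', (b, b') ∈ N.rolI R ∧ (a', b') ∈ Z) ∧
    (∀ R b', (∃ a', (a, a') ∈ M.rolI R) → (b, b') ∈ N.rolI R →
      ∃ a', (a, a') ∈ M.rolI R ∧ (a', b') ∈ Z)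

/-- `𝔄,a ⪯_∇ 𝔅,b`: some ELU_∇-simulation contains `(a,b)`. -/
def NablaSim (M : Str Con Rol D1) (N : Str Con Rol D2) (a : D1) (b : D2) : Prop :=
  ∃ Z, IsNablaSim M N Z ∧ (a, b) ∈ Z

/-- The ℓ-round ELU_∇-simulation relations `⪯^ℓ_∇`. -/
def NablaSimL (M : Str Con Rol D1) (N : Str Con Rol D2) : ℕ → D1 → D2 → Prop
  | 0 => fun a b => ∀ A, a ∈ M.conI A → b ∈ N.conI A
  | ℓ + 1 => fun a b =>
      (∀ A, a ∈ M.conI A → b ∈ N.conI A) ∧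
      (∀ R a', (a, a') ∈ M.rolI R → ∃ b', (b, b') ∈ N.rolI R ∧ NablaSimL M N ℓ a' b') ∧
      (∀ R b', (∃ a', (a, a') ∈ M.rolI R) → (b, b') ∈ N.rolI R →
        ∃ a', (a, a') ∈ M.rolI R ∧ NablaSimL M N ℓ a' b')

/-- `𝔄,a ≤^ℓ_{ELU_∇} 𝔅,b`. -/
def leELUNablaDepth (M : Str Con Rol D1) (N : Str Con Rol D2) (ℓ : ℕ) (a : D1) (b : D2) :
    Prop :=
  ∀ C : ALC Con Rol, C.IsELUNabla → C.depth ≤ ℓ → a ∈ C.sem M → b ∈ C.sem N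

/-- `𝔄,a ≤_{ELU_∇} 𝔅,b`. -/
def leELUNabla (M : Str Con Rol D1) (N : Str Con Rol D2) (a : D1) (b : D2) : Prop :=
  ∀ C : ALC Con Rol, C.IsELUNabla → a ∈ C.sem M → b ∈ C.sem N
section EFAux

open Classical in
/-- Basic facts extracted from `NablaSimL` at any level. -/
lemma nablaSimL_atoms {M : Str Con Rol D1} {N : Str Con Rol D2} :
    ∀ {ℓ : ℕ} {a : D1} {b : D2}, NablaSimL M N ℓ a b → ∀ A, a ∈ M.conI A → b ∈ N.conI A := by
  intro ℓ a b h
  cases ℓ with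
  | zero => exact h
  | succ ℓ => exact h.1

lemma nablaSimL_succ {M : Str Con Rol D1} {N : Str Con Rol D2} :
    ∀ {ℓ : ℕ} {a : D1} {b : D2}, NablaSimL M N (ℓ + 1) a b → NablaSimL M N ℓ a b := by
  intro ℓ
  induction ℓ with
  | zero => intro a b h; exact h.1
  | succ ℓ ih =>
    intro a b h
    refine ⟨h.1, ?_, ?_⟩
    · intro R a' ha'
      obtain ⟨b', hb', hs⟩ := h.2.1 R a' ha'
      exact ⟨b', hb', ih hs⟩
    · intro R b' hex hb'
      obtain ⟨a', ha', hs⟩ := h.2.2 R b' hex hb'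
      exact ⟨a', ha', ih hs⟩

lemma nablaSimL_mono {M : Str Con Rol D1} {N : Str Con Rol D2} {ℓ ℓ' : ℕ} (hle : ℓ ≤ ℓ')
    {a : D1} {b : D2} (h : NablaSimL M N ℓ' a b) : NablaSimL M N ℓ a b := by
  induction hle with
  | refl => exact h
  | step _ ih => exact ih (nablaSimL_succ h)

/-- Easy direction: round-bounded simulation preserves ELU_∇-concepts. -/
lemma nablaSimL_preserves {M : Str Con Rol D1} {N : Str Con Rol D2}
    {C : ALC Con Rol} (hC : C.IsELUNabla) :
    ∀ (ℓ : ℕ) (a : D1) (b : D2), NablaSimL M N ℓ a b → C.depth ≤ ℓ →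
      a ∈ C.sem M → b ∈ C.sem N := by
  induction hC with
  | top => intro ℓ a b _ _ _; trivial
  | atomic A => intro ℓ a b h _ ha; exact nablaSimL_atoms h A ha
  | conj h1 h2 ih1 ih2 =>
    intro ℓ a b h hd ha
    simp only [ALC.depth, max_le_iff] at hd
    exact ⟨ih1 ℓ a b h hd.1 ha.1, ih2 ℓ a b h hd.2 ha.2⟩
  | disj h1 h2 ih1 ih2 =>
    intro ℓ a b h hd ha
    simp only [ALC.depth, max_le_iff] at hd
    rcases ha with ha | ha
    · exact Or.inl (ih1 ℓ a b h hd.1 ha)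
    · exact Or.inr (ih2 ℓ a b h hd.2 ha)
  | ex R h1 ih =>
    intro ℓ a b h hd ha
    cases ℓ with
    | zero => simp [ALC.depth] at hd
    | succ ℓ =>
      simp only [ALC.depth, Nat.add_le_add_iff_right] at hd
      obtain ⟨a', ha', haC⟩ := ha
      obtain ⟨b', hb', hs⟩ := h.2.1 R a' ha'
      exact ⟨b', hb', ih ℓ a' b' hs hd haC⟩
  | nabla R h1 ih =>
    intro ℓ a b h hd ha
    cases ℓ with
    | zero => simp [ALC.depth] at hd
    | succ ℓ =>
      simp only [ALC.depth, max_le_iff, Nat.add_le_add_iff_right] at hd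
      obtain ⟨⟨a0, ha0, -⟩, hall⟩ := ha
      obtain ⟨b0, hb0, -⟩ := h.2.1 R a0 ha0
      refine ⟨⟨b0, hb0, trivial⟩, ?_⟩
      intro b' hb'
      obtain ⟨a', ha', hs⟩ := h.2.2 R b' ⟨a0, ha0⟩ hb'
      exact ih ℓ a' b' hs hd.2 (hall a' ha')

/-- An ELU_∇-simulation yields all round-bounded simulations. -/
lemma nablaSim_to_simL {M : Str Con Rol D1} {N : Str Con Rol D2} {Z : Set (D1 × D2)}
    (hZ : IsNablaSim M N Z) :
    ∀ (ℓ : ℕ) (a : D1) (b : D2), (a, b) ∈ Z → NablaSimL M N ℓ a b := by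
  intro ℓ
  induction ℓ with
  | zero => intro a b hab; exact (hZ a b hab).1
  | succ ℓ ih =>
    intro a b hab
    obtain ⟨h1, h2, h3⟩ := hZ a b hab
    refine ⟨h1, ?_, ?_⟩
    · intro R a' ha'
      obtain ⟨b', hb', hz⟩ := h2 R a' ha'
      exact ⟨b', hb', ih a' b' hz⟩
    · intro R b' hex hb'
      obtain ⟨a', ha', hz⟩ := h3 R b' hex hb'
      exact ⟨a', ha', ih a' b' hz⟩

/-- On finite structures, the intersection of all round-bounded simulations is a simulation. -/
lemma nablaSimL_all_to_sim {M : Str Con Rol D1} {N : Str Con Rol D2}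
    [Finite D1] [Finite D2] {a : D1} {b : D2}
    (h : ∀ ℓ : ℕ, NablaSimL M N ℓ a b) : NablaSim M N a b := by
  classical
  haveI := Fintype.ofFinite D1
  haveI := Fintype.ofFinite D2
  refine ⟨{p | ∀ ℓ, NablaSimL M N ℓ p.1 p.2}, ?_, h⟩
  intro a b hab
  refine ⟨nablaSimL_atoms (hab 0), ?_, ?_⟩
  · intro R a' ha'
    by_contra hcon
    push_neg at hcon
    have key : ∀ b' : D2, ∃ ℓ : ℕ, (b, b') ∈ N.rolI R → ¬ NablaSimL M N ℓ a' b' := by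
      intro b'
      by_cases hb' : (b, b') ∈ N.rolI R
      · obtain ⟨ℓ, hℓ⟩ := not_forall.mp (fun hall => hcon b' hb' hall)
        exact ⟨ℓ, fun _ => hℓ⟩
      · exact ⟨0, fun hb => absurd hb hb'⟩
    choose g hg using key
    set L := Finset.univ.sup g with hL
    obtain ⟨b', hb', hs⟩ := (hab (L + 1)).2.1 R a' ha'
    exact hg b' hb' (nablaSimL_mono (Finset.le_sup (Finset.mem_univ b')) hs)
  · intro R b' hex hb'
    by_contra hcon
    push_neg at hcon
    have key : ∀ a' : D1, ∃ ℓ : ℕ, (a, a') ∈ M.rolI R → ¬ NablaSimL M N ℓ a' b' := by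
      intro a'
      by_cases ha' : (a, a') ∈ M.rolI R
      · obtain ⟨ℓ, hℓ⟩ := not_forall.mp (fun hall => hcon a' ha' hall)
        exact ⟨ℓ, fun _ => hℓ⟩
      · exact ⟨0, fun ha => absurd ha ha'⟩
    choose g hg using key
    set L := Finset.univ.sup g with hL
    obtain ⟨a', ha', hs⟩ := (hab (L + 1)).2.2 R b' hex hb'
    exact hg a' ha' (nablaSimL_mono (Finset.le_sup (Finset.mem_univ a')) hs)

end EFAux
section EFChi

/-- Finite conjunctions. -/
def conjL : List (ALC Con Rol) → ALC Con Rol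
  | [] => .top
  | C :: L => .conj C (conjL L)

/-- Finite disjunctions (empty disjunction is `⊤`; only used nonempty). -/
def disjL : List (ALC Con Rol) → ALC Con Rol
  | [] => .top
  | [C] => C
  | C :: C' :: L => .disj C (disjL (C' :: L))

lemma conjL_isELUNabla {L : List (ALC Con Rol)} (h : ∀ C ∈ L, C.IsELUNabla) :
    (conjL L).IsELUNabla := by
  induction L with
  | nil => exact .top
  | cons C L ih =>
    exact .conj (h C (by simp)) (ih fun C hC => h C (List.mem_cons_of_mem _ hC))

lemma disjL_isELUNabla : ∀ {L : List (ALC Con Rol)}, (∀ C ∈ L, C.IsELUNabla) →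
    (disjL L).IsELUNabla
  | [], _ => .top
  | [C], h => h C (by simp)
  | C :: C' :: L, h =>
    .disj (h C (by simp))
      (disjL_isELUNabla fun D hD => h D (List.mem_cons_of_mem _ hD))

lemma conjL_depth {L : List (ALC Con Rol)} {n : ℕ} (h : ∀ C ∈ L, C.depth ≤ n) :
    (conjL L).depth ≤ n := by
  induction L with
  | nil => exact Nat.zero_le n
  | cons C L ih =>
    exact max_le (h C (by simp)) (ih fun C hC => h C (List.mem_cons_of_mem _ hC))

lemma disjL_depth : ∀ {L : List (ALC Con Rol)} {n : ℕ}, (∀ C ∈ L, C.depth ≤ n) →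
    (disjL L).depth ≤ n
  | [], n, _ => Nat.zero_le n
  | [C], _, h => h C (by simp)
  | C :: C' :: L, _, h =>
    max_le (h C (by simp))
      (disjL_depth fun D hD => h D (List.mem_cons_of_mem _ hD))

lemma mem_conjL_sem {M : Str Con Rol D} {L : List (ALC Con Rol)} {x : D} :
    x ∈ (conjL L).sem M ↔ ∀ C ∈ L, x ∈ C.sem M := by
  induction L with
  | nil => simp [conjL, ALC.sem]
  | cons C L ih =>
    constructor
    · rintro ⟨h1, h2⟩ C' hC'
      rcases List.mem_cons.mp hC' with rfl | hC'
      · exact h1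
      · exact ih.mp h2 C' hC'
    · intro h
      exact ⟨h C (by simp), ih.mpr fun C' hC' => h C' (List.mem_cons_of_mem _ hC')⟩

lemma mem_disjL_sem_of {M : Str Con Rol D} :
    ∀ {L : List (ALC Con Rol)} {x : D} {C : ALC Con Rol},
      C ∈ L → x ∈ C.sem M → x ∈ (disjL L).sem M
  | [], _, _, hC, _ => by simp at hC
  | [C'], x, C, hC, hx => by
    rcases List.mem_cons.mp hC with rfl | hC
    · exact hx
    · simp at hC
  | C' :: C'' :: L, x, C, hC, hx => by
    rcases List.mem_cons.mp hC with rfl | hC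
    · exact Or.inl hx
    · exact Or.inr (mem_disjL_sem_of hC hx)

lemma exists_of_mem_disjL_sem {M : Str Con Rol D} :
    ∀ {L : List (ALC Con Rol)} {x : D}, L ≠ [] → x ∈ (disjL L).sem M →
      ∃ C ∈ L, x ∈ C.sem M
  | [], _, hL, _ => absurd rfl hL
  | [C], x, _, hx => ⟨C, by simp, hx⟩
  | C :: C' :: L, x, _, hx => by
    rcases hx with hx | hx
    · exact ⟨C, by simp, hx⟩
    · obtain ⟨C'', hC'', hx''⟩ := exists_of_mem_disjL_sem (by simp) hx
      exact ⟨C'', List.mem_cons_of_mem _ hC'', hx''⟩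

/-- Bounded-depth types over a finite vocabulary. -/
def Ty (Con Rol : Type) : ℕ → Type
  | 0 => Finset Con
  | ℓ + 1 => Finset Con × (Rol → Finset (Ty Con Rol ℓ))

instance finiteFinset {α : Type} [Finite α] : Finite (Finset α) :=
  Finite.of_injective (fun s => (s : Set α)) (fun _ _ h => Finset.coe_injective h)

instance tyFinite [Finite Con] [Finite Rol] : ∀ ℓ, Finite (Ty Con Rol ℓ)
  | 0 => by unfold Ty; infer_instance
  | ℓ + 1 => by
    have : Finite (Ty Con Rol ℓ) := tyFinite ℓ
    unfold Ty; infer_instance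

open Classical in
/-- The depth-0 type of a point. -/
noncomputable def type0 [Fintype Con] (M : Str Con Rol D1) (a : D1) : Finset Con :=
  Finset.univ.filter (fun A => a ∈ M.conI A)

open Classical in
lemma mem_type0 [Fintype Con] {M : Str Con Rol D1} {a : D1} {A : Con} :
    A ∈ type0 M a ↔ a ∈ M.conI A := by
  simp [type0]

/-- The depth-ℓ type of a point. -/
noncomputable def typeOf [Fintype Con] [Fintype Rol] (M : Str Con Rol D1) :
    ∀ ℓ : ℕ, D1 → Ty Con Rol ℓ
  | 0, a => type0 M a
  | ℓ + 1, a =>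
    (type0 M a, fun R =>
      (Set.toFinite {t | ∃ a', (a, a') ∈ M.rolI R ∧ typeOf M ℓ a' = t}).toFinset)

lemma mem_typeOf_snd [Fintype Con] [Fintype Rol] {M : Str Con Rol D1} {ℓ : ℕ} {a : D1}
    {R : Rol} {t : Ty Con Rol ℓ} :
    t ∈ (typeOf M (ℓ + 1) a).2 R ↔ ∃ a', (a, a') ∈ M.rolI R ∧ typeOf M ℓ a' = t := by
  simp [typeOf, Set.Finite.mem_toFinset]

open Classical in
/-- The characteristic ELU_∇-concept of a type. -/
noncomputable def chi [Fintype Con] [Fintype Rol] : ∀ ℓ : ℕ, Ty Con Rol ℓ → ALC Con Rol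
  | 0, S => conjL (S.toList.map .atomic)
  | ℓ + 1, p =>
    .conj (conjL (p.1.toList.map .atomic))
      (conjL ((Finset.univ : Finset Rol).toList.map fun R =>
        .conj (conjL ((p.2 R).toList.map fun t => .ex R (chi ℓ t)))
          (if (p.2 R).Nonempty then
            .conj (.ex R .top) (.all R (disjL ((p.2 R).toList.map (chi ℓ))))
          else .top)))

lemma chi_isELUNabla [Fintype Con] [Fintype Rol] :
    ∀ (ℓ : ℕ) (t : Ty Con Rol ℓ), (chi (Con := Con) (Rol := Rol) ℓ t).IsELUNabla := by
  intro ℓ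
  induction ℓ with
  | zero =>
    intro S
    apply conjL_isELUNabla
    intro C hC
    obtain ⟨A, -, rfl⟩ := List.mem_map.mp hC
    exact .atomic A
  | succ ℓ ih =>
    intro p
    refine .conj ?_ ?_
    · apply conjL_isELUNabla
      intro C hC
      obtain ⟨A, -, rfl⟩ := List.mem_map.mp hC
      exact .atomic A
    · apply conjL_isELUNabla
      intro C hC
      obtain ⟨R, -, rfl⟩ := List.mem_map.mp hC
      refine .conj ?_ ?_
      · apply conjL_isELUNabla
        intro C hC
        obtain ⟨t, -, rfl⟩ := List.mem_map.mp hC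
        exact .ex R (ih t)
      · split
        · exact .nabla R (disjL_isELUNabla fun C hC => by
            obtain ⟨t, -, rfl⟩ := List.mem_map.mp hC
            exact ih t)
        · exact .top

lemma chi_depth [Fintype Con] [Fintype Rol] :
    ∀ (ℓ : ℕ) (t : Ty Con Rol ℓ), (chi (Con := Con) (Rol := Rol) ℓ t).depth ≤ ℓ := by
  intro ℓ
  induction ℓ with
  | zero =>
    intro S
    apply conjL_depth
    intro C hC
    obtain ⟨A, -, rfl⟩ := List.mem_map.mp hC
    exact le_refl 0
  | succ ℓ ih =>
    intro p
    refine max_le ?_ ?_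
    · refine le_trans (conjL_depth ?_) (Nat.zero_le _)
      intro C hC
      obtain ⟨A, -, rfl⟩ := List.mem_map.mp hC
      exact le_refl 0
    · apply conjL_depth
      intro C hC
      obtain ⟨R, -, rfl⟩ := List.mem_map.mp hC
      refine max_le ?_ ?_
      · apply conjL_depth
        intro C hC
        obtain ⟨t, -, rfl⟩ := List.mem_map.mp hC
        exact Nat.add_le_add_right (ih t) 1
      · split
        · refine max_le (by simp [ALC.depth]) ?_
          show (disjL _).depth + 1 ≤ ℓ + 1
          refine Nat.add_le_add_right (disjL_depth ?_) 1
          intro C hC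
          obtain ⟨t, -, rfl⟩ := List.mem_map.mp hC
          exact ih t
        · exact Nat.zero_le _

end EFChi
section EFKey

lemma typeOf_snd_nonempty_iff [Fintype Con] [Fintype Rol] {M : Str Con Rol D1} {ℓ : ℕ}
    {a : D1} {R : Rol} :
    ((typeOf M (ℓ + 1) a).2 R).Nonempty ↔ ∃ a', (a, a') ∈ M.rolI R := by
  constructor
  · rintro ⟨t, ht⟩
    obtain ⟨a', ha', -⟩ := mem_typeOf_snd.mp ht
    exact ⟨a', ha'⟩
  · rintro ⟨a', ha'⟩
    exact ⟨typeOf M ℓ a', mem_typeOf_snd.mpr ⟨a', ha', rfl⟩⟩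

lemma chi_self [Fintype Con] [Fintype Rol] (M : Str Con Rol D1) :
    ∀ (ℓ : ℕ) (a : D1), a ∈ (chi ℓ (typeOf M ℓ a)).sem M := by
  intro ℓ
  induction ℓ with
  | zero =>
    intro a
    rw [show chi 0 (typeOf M 0 a) = conjL ((type0 M a).toList.map .atomic) from rfl,
      mem_conjL_sem]
    intro C hC
    obtain ⟨A, hA, rfl⟩ := List.mem_map.mp hC
    exact mem_type0.mp (Finset.mem_toList.mp hA)
  | succ ℓ ih =>
    intro a
    rw [show chi (ℓ + 1) (typeOf M (ℓ + 1) a) =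
      .conj (conjL (((typeOf M (ℓ + 1) a).1).toList.map .atomic))
        (conjL ((Finset.univ : Finset Rol).toList.map fun R =>
          .conj (conjL (((typeOf M (ℓ + 1) a).2 R).toList.map fun t => .ex R (chi ℓ t)))
            (if ((typeOf M (ℓ + 1) a).2 R).Nonempty then
              .conj (.ex R .top)
                (.all R (disjL (((typeOf M (ℓ + 1) a).2 R).toList.map (chi ℓ))))
            else .top))) from rfl]
    refine ⟨?_, ?_⟩
    · rw [mem_conjL_sem]
      intro C hC
      obtain ⟨A, hA, rfl⟩ := List.mem_map.mp hC
      exact mem_type0.mp (Finset.mem_toList.mp hA)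
    · rw [mem_conjL_sem]
      intro C hC
      obtain ⟨R, -, rfl⟩ := List.mem_map.mp hC
      refine ⟨?_, ?_⟩
      · rw [mem_conjL_sem]
        intro C hC
        obtain ⟨t, ht, rfl⟩ := List.mem_map.mp hC
        obtain ⟨a', ha', rfl⟩ := mem_typeOf_snd.mp (Finset.mem_toList.mp ht)
        exact ⟨a', ha', ih a'⟩
      · split
        case isTrue hne =>
          obtain ⟨a0, ha0⟩ := typeOf_snd_nonempty_iff.mp hne
          refine ⟨⟨a0, ha0, trivial⟩, ?_⟩
          intro a' ha'
          refine mem_disjL_sem_of (C := chi ℓ (typeOf M ℓ a')) ?_ (ih a')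
          exact List.mem_map.mpr ⟨typeOf M ℓ a',
            Finset.mem_toList.mpr (mem_typeOf_snd.mpr ⟨a', ha', rfl⟩), rfl⟩
        case isFalse => trivial

lemma chi_sound [Fintype Con] [Fintype Rol] (M : Str Con Rol D1) (N : Str Con Rol D2) :
    ∀ (ℓ : ℕ) (a : D1) (b : D2),
      b ∈ (chi ℓ (typeOf M ℓ a)).sem N → NablaSimL M N ℓ a b := by
  intro ℓ
  induction ℓ with
  | zero =>
    intro a b hb A ha
    rw [show chi 0 (typeOf M 0 a) = conjL ((type0 M a).toList.map .atomic) from rfl,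
      mem_conjL_sem] at hb
    exact hb (.atomic A)
      (List.mem_map.mpr ⟨A, Finset.mem_toList.mpr (mem_type0.mpr ha), rfl⟩)
  | succ ℓ ih =>
    intro a b hb
    rw [show chi (ℓ + 1) (typeOf M (ℓ + 1) a) =
      .conj (conjL (((typeOf M (ℓ + 1) a).1).toList.map .atomic))
        (conjL ((Finset.univ : Finset Rol).toList.map fun R =>
          .conj (conjL (((typeOf M (ℓ + 1) a).2 R).toList.map fun t => .ex R (chi ℓ t)))
            (if ((typeOf M (ℓ + 1) a).2 R).Nonempty then
              .conj (.ex R .top)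
                (.all R (disjL (((typeOf M (ℓ + 1) a).2 R).toList.map (chi ℓ))))
            else .top))) from rfl] at hb
    obtain ⟨hb1, hb2⟩ := hb
    rw [mem_conjL_sem] at hb1 hb2
    refine ⟨?_, ?_, ?_⟩
    · intro A ha
      exact hb1 (.atomic A)
        (List.mem_map.mpr ⟨A, Finset.mem_toList.mpr (mem_type0.mpr ha), rfl⟩)
    · intro R a' ha'
      have hR := hb2 _ (List.mem_map.mpr ⟨R, by simp, rfl⟩)
      obtain ⟨hf, -⟩ := hR
      rw [mem_conjL_sem] at hf
      have ht : typeOf M ℓ a' ∈ (typeOf M (ℓ + 1) a).2 R :=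
        mem_typeOf_snd.mpr ⟨a', ha', rfl⟩
      obtain ⟨b', hb', hbC⟩ := hf (.ex R (chi ℓ (typeOf M ℓ a')))
        (List.mem_map.mpr ⟨typeOf M ℓ a', Finset.mem_toList.mpr ht, rfl⟩)
      exact ⟨b', hb', ih a' b' hbC⟩
    · intro R b' hex hb'
      have hR := hb2 _ (List.mem_map.mpr ⟨R, by simp, rfl⟩)
      obtain ⟨-, hback⟩ := hR
      have hne : ((typeOf M (ℓ + 1) a).2 R).Nonempty := typeOf_snd_nonempty_iff.mpr hex
      rw [if_pos hne] at hback
      obtain ⟨-, hall⟩ := hback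
      have hmem : b' ∈ (disjL (((typeOf M (ℓ + 1) a).2 R).toList.map (chi ℓ))).sem N :=
        hall b' hb'
      have hLne : (((typeOf M (ℓ + 1) a).2 R).toList.map (chi ℓ)) ≠ [] := by
        simp only [ne_eq, List.map_eq_nil_iff, Finset.toList_eq_nil]
        exact Finset.nonempty_iff_ne_empty.mp hne
      obtain ⟨C, hC, hbC⟩ := exists_of_mem_disjL_sem hLne hmem
      obtain ⟨t, ht, rfl⟩ := List.mem_map.mp hC
      obtain ⟨a', ha', rfl⟩ := mem_typeOf_snd.mp (Finset.mem_toList.mp ht)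
      exact ⟨a', ha', ih a' b' hbC⟩

end EFKey

/-- **Ehrenfeucht–Fraïssé game for ELU_∇.**
For any finite vocabulary τ, pointed τ-structures `𝔄,a` and `𝔅,b`, and any `ℓ < ω`:
`𝔄,a ≤^ℓ_{ELU_∇} 𝔅,b` iff `𝔄,a ⪯^ℓ_∇ 𝔅,b`.  If `𝔄` and `𝔅` are finite, then
`𝔄,a ≤_{ELU_∇} 𝔅,b` iff `𝔄,a ⪯_∇ 𝔅,b`. -/
theorem eluNabla_ef_game {Con Rol : Type} [Fintype Con] [Fintype Rol]
    {D1 D2 : Type} [Nonempty D1] [Nonempty D2]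
    (M : Str Con Rol D1) (N : Str Con Rol D2) (a : D1) (b : D2) :
    (∀ ℓ : ℕ, leELUNablaDepth M N ℓ a b ↔ NablaSimL M N ℓ a b) ∧
    (Finite D1 → Finite D2 → (leELUNabla M N a b ↔ NablaSim M N a b)) := by
  have main : ∀ ℓ : ℕ, leELUNablaDepth M N ℓ a b ↔ NablaSimL M N ℓ a b := by
    intro ℓ
    constructor
    · intro h
      exact chi_sound M N ℓ a b
        (h _ (chi_isELUNabla ℓ (typeOf M ℓ a)) (chi_depth ℓ (typeOf M ℓ a)) (chi_self M ℓ a))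
    · intro h C hC hd ha
      exact nablaSimL_preserves hC ℓ a b h hd ha
  refine ⟨main, ?_⟩
  intro hD1 hD2
  constructor
  · intro h
    exact nablaSimL_all_to_sim fun ℓ => (main ℓ).mp fun C hC _ ha => h C hC ha
  · rintro ⟨Z, hZ, hab⟩ C hC ha
    exact nablaSimL_preserves hC C.depth a b (nablaSim_to_simL hZ C.depth a b hab)
      le_rfl ha
end
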